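/- Let A be a commutative unital K-algebra and P an A-module. The map (a,(X,σ)) ↦ (X∘a, a•σ) — where X∘a is the operator p ↦ X(a•p) — also endows Der(P) with an A-module structure, and (A, Der(P)) with this second module structure, the commutator bracket, and the symbol anchor (X,σ) ↦ σ is again a Lie-Rinehart algebra. -/
import Mathlib


/-- A module derivation of the `A`-module `P`: a pair `(X, σ)` (encoded as an element of
`End_K P × End_K A`) with `σ` a derivation of `A` and `X (a • p) = σ a • p + a • X p`. -/
def IsModuleDerivation (K A P : Type) [Field K] [CommRing A] [Algebra K A]
    [AddCommGroup P] [Module K P] [Module A P] [IsScalarTower K A P]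
    (d : Module.End K P × Module.End K A) : Prop :=
  (∀ a b : A, d.2 (a * b) = a * d.2 b + d.2 a * b) ∧
  (∀ (a : A) (p : P), d.1 (a • p) = d.2 a • p + a • d.1 p)

/-- the map `(a, (X,σ)) ↦ (X ∘ (a·), a•σ)` — where `X ∘ (a·)` is the
operator `p ↦ X (a • p)`, i.e. `X * (a • 1)` in `End_K P` — also endows `Der(P)` with an
`A`-module structure, and `(A, Der(P))` with this second module structure, the
componentwise commutator bracket, and the symbol anchor `(X,σ) ↦ σ` is again a
Lie-Rinehart algebra: closure under the action and the bracket, `A`-linearity of the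
anchor, the anchor is a Lie morphism, and the Leibniz compatibility
`[d, a •ᵣ d'] = (σ_d a) •ᵣ d' + a •ᵣ [d, d']` holds. -/
theorem der_right_module_lieRinehart
    (K A P : Type) [Field K] [CharZero K] [CommRing A] [Algebra K A]
    [AddCommGroup P] [Module K P] [Module A P] [IsScalarTower K A P]
    [SMulCommClass K A P] :
    -- closure under the A-action (a,(X,σ)) ↦ (X ∘ (a·), a•σ)
    (∀ d, IsModuleDerivation K A P d → ∀ a : A,
      IsModuleDerivation K A P (d.1 * (a • (1 : Module.End K P)), a • d.2)) ∧
    -- closure under the componentwise commutator bracket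
    (∀ d d', IsModuleDerivation K A P d → IsModuleDerivation K A P d' →
      IsModuleDerivation K A P (⁅d.1, d'.1⁆, ⁅d.2, d'.2⁆)) ∧
    -- the anchor (symbol) is A-linear for this module structure
    (∀ (d : Module.End K P × Module.End K A) (a b : A), (a • d.2) b = a * d.2 b) ∧
    -- the anchor is a morphism of Lie algebras
    (∀ (d d' : Module.End K P × Module.End K A),
      ((⁅d.1, d'.1⁆, ⁅d.2, d'.2⁆) : Module.End K P × Module.End K A).2 = ⁅d.2, d'.2⁆) ∧
    -- Lie-Rinehart Leibniz compatibility for the right module structure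
    (∀ d d' (a : A), IsModuleDerivation K A P d → IsModuleDerivation K A P d' →
      (⁅d.1, d'.1 * (a • (1 : Module.End K P))⁆, ⁅d.2, a • d'.2⁆) =
        ((d'.1 * (d.2 a • (1 : Module.End K P)) + ⁅d.1, d'.1⁆ * (a • (1 : Module.End K P)) : Module.End K P),
         (d.2 a • d'.2 + a • ⁅d.2, d'.2⁆ : Module.End K A))) := by

  refine ⟨?_, ?_, ?_, ?_, ?_⟩
  · rintro ⟨X, σ⟩ ⟨hσ, hX⟩ a
    refine ⟨fun b c => ?_, fun b p => ?_⟩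
    · simp only [LinearMap.smul_apply, smul_eq_mul, hσ]; ring
    · simp only [Module.End.mul_apply, LinearMap.smul_apply, Module.End.one_apply,
        smul_eq_mul, smul_smul]
      rw [hX, hX, hσ]
      simp only [add_smul, smul_smul, smul_add]
      ring_nf
      module
  · rintro ⟨X, σ⟩ ⟨X', σ'⟩ ⟨hσ, hX⟩ ⟨hσ', hX'⟩
    refine ⟨fun a b => ?_, fun a p => ?_⟩
    · simp only [LieRing.of_associative_ring_bracket, LinearMap.sub_apply,
        Module.End.mul_apply] at *
      rw [hσ' a b, hσ a b, map_add, map_add, hσ a (σ' b), hσ (σ' a) b,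
        hσ' a (σ b), hσ' (σ a) b]
      ring
    · simp only [LieRing.of_associative_ring_bracket, LinearMap.sub_apply,
        Module.End.mul_apply]
      rw [hX' a p, map_add, hX (σ' a) p, hX a (X' p), hX a p, map_add,
        hX' (σ a) p, hX' a (X p)]
      module
  · intro d a b
    simp only [LinearMap.smul_apply, smul_eq_mul]
  · intro d d'
    rfl
  · rintro ⟨X, σ⟩ ⟨X', σ'⟩ a ⟨hσ, hX⟩ ⟨hσ', hX'⟩
    simp only [Prod.mk.injEq]
    constructor
    · refine LinearMap.ext fun p => ?_
      simp only [LieRing.of_associative_ring_bracket, LinearMap.sub_apply,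
        Module.End.mul_apply, LinearMap.add_apply, LinearMap.smul_apply,
        Module.End.one_apply]
      rw [hX a p, map_add]
      abel
    · refine LinearMap.ext fun b => ?_
      simp only [LieRing.of_associative_ring_bracket, LinearMap.sub_apply,
        Module.End.mul_apply, LinearMap.add_apply, LinearMap.smul_apply,
        smul_eq_mul]
      rw [hσ a (σ' b)]
      ring
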